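/- arXiv:2102.12641 — 4 statements merged into one kernel-verified Lean document; each statement's English description precedes it below -/
import Mathlib

section
/- Let A be a group acting on a set Z, let T be a commutative group, and let q : A → T be a group homomorphism such that every element of the kernel of q has at least one fixed point in Z. Then for every finitely generated subgroup Π ≤ A there exists a subgroup Γ ≤ Π of finite index in Π with the following property: every finite subgroup H ≤ Γ that acts freely on Z (i.e. for every h ∈ H with h ≠ 1 and every z ∈ Z one has h • z ≠ z) is the trivial subgroup. -/
/-!
A finitely generated abelian group is virtually torsion-free: in the structure theorem, the kernel
of the projection onto the finite torsion factor has finite index and no torsion. Applied to the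
image of `P` under `q`, this yields a finite-index `Γ ≤ P` whose elements of finite order lie in
`ker q`. Elements of a finite subgroup of `Γ` have finite order, hence fixed points, so a free
finite subgroup of `Γ` is trivial.
-/

theorem CommGroup.exists_index_ne_zero_forall_isOfFinOrder_eq_one (G : Type*) [CommGroup G]
    [Group.FG G] : ∃ K : Subgroup G, K.index ≠ 0 ∧ ∀ g ∈ K, IsOfFinOrder g → g = 1 := by
  obtain ⟨ι, j, _, _, p, hp, n, ⟨e⟩⟩ := CommGroup.equiv_free_prod_prod_multiplicative_zmod G
  have : ∀ i, NeZero (p i ^ n i) := fun i => ⟨pow_ne_zero _ (hp i).ne_zero⟩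
  let torsionPart := (MonoidHom.snd _ _).comp e.toMonoidHom
  refine ⟨torsionPart.ker, ?_, fun g hg hfin => ?_⟩
  · rw [Subgroup.index_ker]
    exact Nat.card_pos.ne'
  · have hfst : (e g).1 = 1 :=
      ((MonoidHom.fst _ _).isOfFinOrder (e.toMonoidHom.isOfFinOrder hfin)).eq_one'
    exact e.map_eq_one_iff.mp (Prod.ext hfst hg)

theorem MonoidHom.exists_index_ne_zero_forall_isOfFinOrder_map_eq_one {G T : Type*} [Group G]
    [Group.FG G] [CommGroup T] (f : G →* T) :
    ∃ K : Subgroup G, K.index ≠ 0 ∧ ∀ g ∈ K, IsOfFinOrder g → f g = 1 := by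
  obtain ⟨K, hK, htf⟩ := CommGroup.exists_index_ne_zero_forall_isOfFinOrder_eq_one f.range
  refine ⟨K.comap f.rangeRestrict, ?_, fun g hg hfin => ?_⟩
  · rwa [Subgroup.index_comap_of_surjective _ f.rangeRestrict_surjective]
  · exact congrArg Subtype.val (htf _ hg (f.rangeRestrict.isOfFinOrder hfin))

theorem Subgroup.exists_relIndex_ne_zero_forall_isOfFinOrder_map_eq_one {G T : Type*} [Group G]
    [CommGroup T] (f : G →* T) (P : Subgroup G) [Group.FG P] :
    ∃ Γ ≤ P, Γ.relIndex P ≠ 0 ∧ ∀ g ∈ Γ, IsOfFinOrder g → f g = 1 := by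
  obtain ⟨K, hK, htf⟩ := (f.comp P.subtype).exists_index_ne_zero_forall_isOfFinOrder_map_eq_one
  refine ⟨K.map P.subtype, map_subtype_le K, ?_, ?_⟩
  · rwa [relIndex, subgroupOf, comap_map_eq_self_of_injective P.subtype_injective]
  · rintro _ ⟨g, hg, rfl⟩ hfin
    exact htf g hg ((Function.Injective.isOfFinOrder_iff P.subtype_injective).mp hfin)

/-- Let `A` be a group acting on a set `Z`, `T` a commutative group and `q : A →* T` a
homomorphism such that every element of `ker q` has a fixed point in `Z`.  Then every finitely
generated subgroup `P ≤ A` contains a subgroup `Γ` of finite index in `P` such that every finite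
subgroup of `Γ` acting freely on `Z` is trivial. -/
theorem exists_finiteIndex_subgroup_no_free_finite_subgroups
    {A T Z : Type*} [Group A] [CommGroup T] [MulAction A Z]
    (q : A →* T) (hq : ∀ a ∈ q.ker, ∃ z : Z, a • z = z)
    (P : Subgroup A) (hP : Group.FG P) :
    ∃ Γ : Subgroup A, Γ ≤ P ∧ Γ.relIndex P ≠ 0 ∧
      ∀ H : Subgroup A, H ≤ Γ → Finite H →
        (∀ h ∈ H, h ≠ 1 → ∀ z : Z, h • z ≠ z) → H = ⊥ := by
  obtain ⟨Γ, hΓP, hΓ, hker⟩ := P.exists_relIndex_ne_zero_forall_isOfFinOrder_map_eq_one q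
  refine ⟨Γ, hΓP, hΓ, fun H hHΓ hH hfree => (Subgroup.eq_bot_iff_forall H).mpr fun h hh => ?_⟩
  have hfin : IsOfFinOrder h :=
    Submonoid.isOfFinOrder_coe.mpr (isOfFinOrder_of_finite (⟨h, hh⟩ : H))
  obtain ⟨z, hz⟩ := hq h (hker h (hHΓ hh) hfin)
  by_contra hne
  exact hfree h hh hne z hz
end

section
/- Let K be a field and V a vector space over K with dual space V*. Let π : V* → V be a skew linear map (f (π g) = − g (π f) for all f, g ∈ V*) and σ : V → V* a skew linear map ((σ v) w = − (σ w) v for all v, w ∈ V), and suppose θ := π ∘ σ is idempotent, θ ∘ θ = θ. Then: (i) θ is self-adjoint with respect to σ, i.e. (σ (θ v)) w = (σ v) (θ w) for all v, w ∈ V; (ii) every vector v in the kernel of θ is σ-orthogonal to the range of θ, i.e. (σ v) w = 0 for all w in the range of θ; (iii) π inverts σ on the range of θ, i.e. π (σ v) = v for every v in the range of θ; (iv) the range of θ ∘ π equals the range of θ. -/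
/-- Let `π : V* → V` and `σ : V → V*` be skew linear maps such that `θ := π ∘ σ` is idempotent.
Then: (i) `θ` is self-adjoint with respect to `σ`; (ii) every vector in the kernel of `θ` is
`σ`-orthogonal to the range of `θ`; (iii) `π` inverts `σ` on the range of `θ`; and (iv) the range
of `θ ∘ π` equals the range of `θ`. -/
theorem subcalibration_linear_algebra
    {K V : Type*} [Field K] [AddCommGroup V] [Module K V]
    (π : Module.Dual K V →ₗ[K] V) (σ : V →ₗ[K] Module.Dual K V)
    (hπ : ∀ f g : Module.Dual K V, f (π g) = - g (π f))
    (hσ : ∀ v w : V, σ v w = - σ w v)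
    (hidem : (π ∘ₗ σ) ∘ₗ (π ∘ₗ σ) = π ∘ₗ σ) :
    (∀ v w : V, σ ((π ∘ₗ σ) v) w = σ v ((π ∘ₗ σ) w)) ∧
      (∀ v : V, (π ∘ₗ σ) v = 0 → ∀ w ∈ LinearMap.range (π ∘ₗ σ), σ v w = 0) ∧
      (∀ v ∈ LinearMap.range (π ∘ₗ σ), π (σ v) = v) ∧
      LinearMap.range ((π ∘ₗ σ) ∘ₗ π) = LinearMap.range (π ∘ₗ σ) := by
  have hsa : ∀ v w : V, σ ((π ∘ₗ σ) v) w = σ v ((π ∘ₗ σ) w) := by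
    intro v w
    calc σ ((π ∘ₗ σ) v) w = -(σ w) (π (σ v)) := hσ _ _
      _ = σ v (π (σ w)) := by rw [hπ (σ w) (σ v)]; ring
      _ = σ v ((π ∘ₗ σ) w) := rfl
  have hinv : ∀ v ∈ LinearMap.range (π ∘ₗ σ), π (σ v) = v := by
    rintro _ ⟨u, rfl⟩
    have := LinearMap.congr_fun hidem u
    simpa using this
  refine ⟨hsa, ?_, hinv, ?_⟩
  · rintro v hv _ ⟨u, rfl⟩
    have := hsa v u
    rw [hv] at this
    simpa using this.symm
  · apply le_antisymm
    · rintro _ ⟨f, rfl⟩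
      exact ⟨π f, rfl⟩
    · rintro _ ⟨u, rfl⟩
      refine ⟨σ u, ?_⟩
      have := LinearMap.congr_fun hidem u
      simpa using this
end

section
/- Let K be a field and V a vector space over K with dual space V*. Let π : V* → V be a skew linear map (f (π g) = − g (π f) for all f, g ∈ V*) and σ : V → V* a skew linear map ((σ v) w = − (σ w) v for all v, w ∈ V), and suppose θ := π ∘ σ is idempotent, θ ∘ θ = θ. Define π_F := θ ∘ π ∘ θᵀ and π_G := (id − θ) ∘ π ∘ (id − θᵀ), where θᵀ : V* → V* is the transpose of θ. Then π = π_F + π_G, and for every scalar t ∈ K with t ≠ −1 one has π ∘ (id − (t/(1+t)) • θᵀ) = (1/(1+t)) • π_F + π_G. -/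
/-- Let `π : V* → V` and `σ : V → V*` be skew linear maps such that `θ := π ∘ σ` is idempotent,
and set `π_F := θ ∘ π ∘ θᵀ` and `π_G := (id − θ) ∘ π ∘ (id − θᵀ)`.  Then `π = π_F + π_G`, and
for every scalar `t ≠ −1` one has `π ∘ (id − (t/(1+t)) • θᵀ) = (1/(1+t)) • π_F + π_G`. -/
theorem gauge_transform_decomposition
    {K V : Type*} [Field K] [AddCommGroup V] [Module K V]
    (π : Module.Dual K V →ₗ[K] V) (σ : V →ₗ[K] Module.Dual K V)
    (hπ : ∀ f g : Module.Dual K V, f (π g) = - g (π f))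
    (hσ : ∀ v w : V, σ v w = - σ w v)
    (hidem : (π ∘ₗ σ) ∘ₗ (π ∘ₗ σ) = π ∘ₗ σ) :
    π = (π ∘ₗ σ) ∘ₗ π ∘ₗ (π ∘ₗ σ).dualMap +
        (LinearMap.id - π ∘ₗ σ) ∘ₗ π ∘ₗ (LinearMap.id - (π ∘ₗ σ).dualMap) ∧
      ∀ t : K, t ≠ -1 →
        π ∘ₗ (LinearMap.id - (t / (1 + t)) • (π ∘ₗ σ).dualMap) =
          (1 + t)⁻¹ • ((π ∘ₗ σ) ∘ₗ π ∘ₗ (π ∘ₗ σ).dualMap) +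
            (LinearMap.id - π ∘ₗ σ) ∘ₗ π ∘ₗ (LinearMap.id - (π ∘ₗ σ).dualMap) := by
  set θ := π ∘ₗ σ with hθ
  -- Key: π ∘ θᵀ = θ ∘ π
  have hkey : π ∘ₗ θ.dualMap = θ ∘ₗ π := by
    ext f
    rw [← sub_eq_zero, ← Module.forall_dual_apply_eq_zero_iff K]
    intro g
    have h1 : g (π (θ.dualMap f)) = - f (π (σ (π g))) := by
      simp only [LinearMap.dualMap_apply', hθ]
      rw [hπ]
      simp
    have h2 : g (θ (π f)) = - σ (π f) (π g) := by
      simp only [hθ, LinearMap.comp_apply]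
      rw [hπ]
    have h3 : f (π (σ (π g))) = - σ (π g) (π f) := hπ f (σ (π g))
    simp only [map_sub, LinearMap.comp_apply] at *
    rw [h1, h2, h3, hσ (π f) (π g)]
    ring
  have hFG : θ ∘ₗ π ∘ₗ θ.dualMap = θ ∘ₗ π := by
    rw [hkey, ← LinearMap.comp_assoc, hidem]
  have hG : (LinearMap.id - θ) ∘ₗ π ∘ₗ (LinearMap.id - θ.dualMap) = π - θ ∘ₗ π := by
    simp only [LinearMap.comp_sub, LinearMap.sub_comp, LinearMap.comp_id, LinearMap.id_comp,
      hkey]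
    rw [← LinearMap.comp_assoc, hidem]
    abel
  constructor
  · rw [hFG, hG]; abel
  · intro t ht
    have h1t : 1 + t ≠ 0 := by
      intro h
      exact ht (by linear_combination h)
    rw [hFG, hG]
    have : π ∘ₗ (LinearMap.id - (t / (1 + t)) • θ.dualMap)
        = π - (t / (1 + t)) • (θ ∘ₗ π) := by
      simp only [LinearMap.comp_sub, LinearMap.comp_id, LinearMap.comp_smul, hkey]
    rw [this]
    have hc : t / (1 + t) = 1 - (1 + t)⁻¹ := by field_simp; ring
    rw [hc, sub_smul, one_smul]
    abel
end

section
/- Let K be a field and V a vector space over K with dual space V*. Let π : V* → V be a skew linear map (f (π g) = − g (π f) for all f, g ∈ V*) and let θ : V → V be a linear endomorphism satisfying the intertwining relation θ ∘ π = π ∘ θᵀ, where θᵀ f = f ∘ θ. Suppose V is the internal direct sum of two subspaces F' and G such that θ maps F' into F' and is injective on F', and θ vanishes identically on G. Then π is block diagonal with respect to this decomposition: for every functional f ∈ V* vanishing on F' one has π f ∈ G, and for every functional f ∈ V* vanishing on G one has π f ∈ F'. -/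
/-- Let `π : V* → V` be a skew linear map and `θ : V → V` a linear endomorphism satisfying
`θ ∘ π = π ∘ θᵀ`.  Suppose `V` is the internal direct sum of subspaces `F'` and `G` such that
`θ` maps `F'` into itself and is injective on `F'`, and `θ` vanishes on `G`.  Then `π` is block
diagonal: functionals vanishing on `F'` are sent into `G`, and functionals vanishing on `G` are
sent into `F'`. -/
theorem skew_block_diagonal_of_jordan_chevalley
    {K V : Type*} [Field K] [AddCommGroup V] [Module K V]
    (π : Module.Dual K V →ₗ[K] V)
    (hπ : ∀ f g : Module.Dual K V, f (π g) = - g (π f))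
    (θ : V →ₗ[K] V)
    (hcomm : θ ∘ₗ π = π ∘ₗ θ.dualMap)
    (F' G : Submodule K V) (hdisj : F' ⊓ G = ⊥) (hsum : F' ⊔ G = ⊤)
    (hmap : ∀ v ∈ F', θ v ∈ F')
    (hinj : ∀ v ∈ F', θ v = 0 → v = 0)
    (hzero : ∀ v ∈ G, θ v = 0) :
    (∀ f : Module.Dual K V, (∀ v ∈ F', f v = 0) → π f ∈ G) ∧
      (∀ f : Module.Dual K V, (∀ v ∈ G, f v = 0) → π f ∈ F') := by
  have hdecomp : ∀ v : V, ∃ a ∈ F', ∃ b ∈ G, a + b = v := fun v =>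
    Submodule.mem_sup.mp (hsum ▸ Submodule.mem_top (x := v))
  have h1 : ∀ f : Module.Dual K V, (∀ v ∈ F', f v = 0) → π f ∈ G := by
    intro f hf
    obtain ⟨a, ha, b, hb, hab⟩ := hdecomp (π f)
    have hfθ : θ.dualMap f = 0 := by
      ext v
      obtain ⟨x, hx, y, hy, hxy⟩ := hdecomp v
      have hv : θ v = θ x := by rw [← hxy]; simp [hzero y hy]
      simp only [LinearMap.dualMap_apply, LinearMap.zero_apply]
      rw [hv]
      exact hf _ (hmap x hx)
    have hθπ : θ (π f) = 0 := by
      have := congrArg (fun m : Module.Dual K V →ₗ[K] V => m f) hcomm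
      simpa [hfθ] using this
    have hθa : θ a = 0 := by
      have h' : θ (π f) = θ a := by rw [← hab]; simp [hzero b hb]
      rw [← h']; exact hθπ
    have ha0 : a = 0 := hinj a ha hθa
    rw [← hab, ha0, zero_add]; exact hb
  refine ⟨h1, ?_⟩
  intro f hf
  obtain ⟨a, ha, b, hb, hab⟩ := hdecomp (π f)
  have hb0 : ∀ g : Module.Dual K V, (∀ v ∈ F', g v = 0) → g b = 0 := by
    intro g hg
    have hpg : π g ∈ G := h1 g hg
    have hfg : f (π g) = 0 := hf _ hpg
    have hgpf : g (π f) = 0 := by rw [hπ g f, hfg, neg_zero]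
    have : g a + g b = 0 := by rw [← map_add, hab, hgpf]
    rw [hg a ha, zero_add] at this
    exact this
  have hbF : b ∈ F' := by
    have : b ∈ (F'.dualAnnihilator).dualCoannihilator := by
      rw [Submodule.mem_dualCoannihilator]
      intro g hg
      exact hb0 g ((Submodule.mem_dualAnnihilator g).mp hg)
    rwa [Subspace.dualAnnihilator_dualCoannihilator_eq] at this
  have : b ∈ F' ⊓ G := ⟨hbF, hb⟩
  rw [hdisj, Submodule.mem_bot] at this
  rw [← hab, this, add_zero]; exact ha
end
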